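/- arXiv:2008.01629 — 5 statements merged into one kernel-verified Lean document; each statement's English description precedes it below -/
import Mathlib

section
/- Let e = (e^μ_α) be a real invertible 4×4 matrix and γ^μ := Σ_α e^μ_α γ^α_E. Let A_μ = diag_C(Q_μ, M_μ), μ = 0,…,3, be 128×128 matrices with the free 1-form block structure determined by components c^r_μ, c^l_μ ∈ ℂ, q^r_μ, q^l_μ ∈ M₂(ℂ), m^r_μ, m^l_μ ∈ M₃(ℂ). Then the matrix A̸ := −i Σ_μ (γ^μ⊗I₃₂)·A_μ is Hermitian if and only if ρ(A_μ) = −A_μ† for every μ, which holds if and only if c^l_μ = −conj(c^r_μ), q^l_μ = −(q^r_μ)† and m^l_μ = −(m^r_μ)† for every μ. -/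
/-!
Write `γ^μ = [[0, σ^μ], [(σ^μ)†, 0]]` with `σ^μ = e^μ_α σ^α_E`. In each `C`-block the product
`(γ^μ ⊗ I) A_μ` is off-diagonal in `s`, with blocks `σ^μ ⊗ L_μ` and `(σ^μ)† ⊗ R_μ`, where `R_μ`, `L_μ`
are the `r`- and `l`-blocks of `A_μ`. Hence `A̸` is Hermitian iff `Σ_μ σ^μ ⊗ (L_μ + R_μ†) = 0`.
The `σ^α_E` form a basis of `M₂(ℂ)` and `e` is invertible, so the `σ^μ` are linearly independent
and this says `L_μ = -R_μ†` for every `μ`, which is `ρ(A_μ) = -A_μ†`. Comparing the blocks of that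
equation gives the conditions on the components.
-/

open Matrix

noncomputable section

namespace TwistSM

/-! ### Dirac matrices -/

def pauli1 : Matrix (Fin 2) (Fin 2) ℂ := !![0, 1; 1, 0]
def pauli2 : Matrix (Fin 2) (Fin 2) ℂ := !![0, -Complex.I; Complex.I, 0]
def pauli3 : Matrix (Fin 2) (Fin 2) ℂ := !![1, 0; 0, -1]

/-- σ^μ = (I₂, −iσ₁, −iσ₂, −iσ₃) -/
def sigE : Fin 4 → Matrix (Fin 2) (Fin 2) ℂ :=
  ![1, (-Complex.I) • pauli1, (-Complex.I) • pauli2, (-Complex.I) • pauli3]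
/-- σ̃^μ = (I₂, iσ₁, iσ₂, iσ₃) -/
def sigTE : Fin 4 → Matrix (Fin 2) (Fin 2) ℂ :=
  ![1, Complex.I • pauli1, Complex.I • pauli2, Complex.I • pauli3]

/-- Diagonal 2×2 block matrix [[A,0],[0,B]] over a leading `Fin 2` index. -/
def dgB {m : Type} (A B : Matrix m m ℂ) : Matrix (Fin 2 × m) (Fin 2 × m) ℂ :=
  Matrix.of fun p q =>
    if p.1 = q.1 then (if p.1 = 0 then A p.2 q.2 else B p.2 q.2) else 0

/-- Off-diagonal 2×2 block matrix [[0,A],[B,0]] over a leading `Fin 2` index. -/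
def odB {m : Type} (A B : Matrix m m ℂ) : Matrix (Fin 2 × m) (Fin 2 × m) ℂ :=
  Matrix.of fun p q =>
    if p.1 = 0 then (if q.1 = 0 then 0 else A p.2 q.2)
    else (if q.1 = 0 then B p.2 q.2 else 0)

/-- Euclidean Dirac matrices γ^μ_E = [[0, σ^μ],[σ̃^μ, 0]], acting on the spinor
indices (s, ṡ). -/
def gammaE (μ : Fin 4) : Matrix (Fin 2 × Fin 2) (Fin 2 × Fin 2) ℂ := odB (sigE μ) (sigTE μ)

/-- Entrywise complex conjugation of a matrix. -/
def mconj {m n : Type} (A : Matrix m n ℂ) : Matrix m n ℂ := A.map (starRingEnd ℂ)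

/-- C = i γ⁰_E γ²_E (the matrix part of the charge conjugation 𝒥 = C ∘ cc). -/
def Kspin : Matrix (Fin 2 × Fin 2) (Fin 2 × Fin 2) ℂ := Complex.I • (gammaE 0 * gammaE 2)

/-! ### The twisted algebra and its representation on ℂ¹²⁸ -/

/-- Quaternionic 2×2 matrices: of the form [[α,β],[−conj β, conj α]]. -/
def IsQuat (q : Matrix (Fin 2) (Fin 2) ℂ) : Prop :=
  q 1 0 = -(starRingEnd ℂ) (q 0 1) ∧ q 1 1 = (starRingEnd ℂ) (q 0 0)

/-- An element (c, c', q, q', m, m') of the twisted algebra. -/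
structure Alg : Type where
  c : ℂ
  c' : ℂ
  q : Matrix (Fin 2) (Fin 2) ℂ
  q' : Matrix (Fin 2) (Fin 2) ℂ
  m : Matrix (Fin 3) (Fin 3) ℂ
  m' : Matrix (Fin 3) (Fin 3) ℂ
  hq : IsQuat q
  hq' : IsQuat q'

/-- The twist ρ: exchange primed and unprimed entries. -/
def Alg.rho (a : Alg) : Alg := ⟨a.c', a.c, a.q', a.q, a.m', a.m, a.hq', a.hq⟩

/-- Flavour index α, as a pair (flavour pair, index within the pair):
(0,0) = 1̇, (0,1) = 2̇, (1,0) = 1, (1,1) = 2. -/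
abbrev Flav : Type := Fin 2 × Fin 2
/-- Internal index (I, α): lepto-colour I ∈ Fin 4 and flavour α. -/
abbrev Intl : Type := Fin 4 × Flav
/-- (ṡ, (I, α)) -/
abbrev HalfNoS : Type := Fin 2 × Intl
/-- Half of the full space: (s, ṡ, (I, α)). -/
abbrev Half : Type := Fin 2 × HalfNoS
/-- ℂ¹²⁸, indexed by (C, s, ṡ, (I, α)). -/
abbrev Full : Type := Fin 2 × Half

/-- diag(c, conj c) as a 2×2 matrix. -/
def cdiag (c : ℂ) : Matrix (Fin 2) (Fin 2) ℂ := Matrix.diagonal ![c, (starRingEnd ℂ) c]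

def pred3 (i : Fin 4) : Fin 3 := ⟨i.val - 1, by have := i.isLt; omega⟩

/-- diag(c, m) as a 4×4 matrix on the lepto-colour index. -/
def sm4 (c : ℂ) (m : Matrix (Fin 3) (Fin 3) ℂ) : Matrix (Fin 4) (Fin 4) ℂ :=
  Matrix.of fun i j =>
    if i = 0 then (if j = 0 then c else 0)
    else if j = 0 then 0 else m (pred3 i) (pred3 j)

/-- Q_r = diag(c, conj c, q') on the flavour index. -/
def Qr (a : Alg) : Matrix Flav Flav ℂ := dgB (cdiag a.c) a.q'
/-- Q_l = diag(c', conj c', q) on the flavour index. -/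
def Ql (a : Alg) : Matrix Flav Flav ℂ := dgB (cdiag a.c') a.q

/-- diag_α(A⊗I₂, B⊗I₂) on (I, α). -/
def msect (A B : Matrix (Fin 4) (Fin 4) ℂ) : Matrix Intl Intl ℂ :=
  Matrix.of fun p q =>
    if p.2 = q.2 then (if p.2.1 = 0 then A p.1 q.1 else B p.1 q.1) else 0

/-- M_r = diag_α(𝗆⊗I₂, 𝗆'⊗I₂). -/
def Mr (a : Alg) : Matrix Intl Intl ℂ := msect (sm4 a.c a.m) (sm4 a.c' a.m')
/-- M_l = diag_α(𝗆'⊗I₂, 𝗆⊗I₂). -/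
def Ml (a : Alg) : Matrix Intl Intl ℂ := msect (sm4 a.c' a.m') (sm4 a.c a.m)

/-- Lift a flavour matrix to (ṡ, (I, α)), acting trivially on ṡ and I. -/
def liftQ (X : Matrix Flav Flav ℂ) : Matrix HalfNoS HalfNoS ℂ :=
  Matrix.of fun p q => if p.1 = q.1 ∧ p.2.1 = q.2.1 then X p.2.2 q.2.2 else 0

/-- Lift a matrix on (I, α) to (ṡ, (I, α)), acting trivially on ṡ. -/
def liftI (X : Matrix Intl Intl ℂ) : Matrix HalfNoS HalfNoS ℂ :=
  Matrix.of fun p q => if p.1 = q.1 then X p.2 q.2 else 0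

/-- The Q-block of the representation: diag_s(Q_r, Q_l), trivial on ṡ and I. -/
def Qmat (a : Alg) : Matrix Half Half ℂ := dgB (liftQ (Qr a)) (liftQ (Ql a))
/-- The M-block of the representation: diag_s(M_r, M_l), trivial on ṡ. -/
def Mmat (a : Alg) : Matrix Half Half ℂ := dgB (liftI (Mr a)) (liftI (Ml a))

/-- The representation π(a) = diag_C(Q, M) of the twisted algebra on ℂ¹²⁸. -/
def rep (a : Alg) : Matrix Full Full ℂ := dgB (Qmat a) (Mmat a)

/-- Twisted commutator [T, π(b)]_ρ = T·π(b) − π(ρ(b))·T. -/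
def tcomm (T : Matrix Full Full ℂ) (b : Alg) : Matrix Full Full ℂ :=
  T * rep b - rep b.rho * T

/-- K = (i γ⁰_E γ²_E) ⊗ ξ ⊗ I₁₆ (with ξ on the internal index C);
the real structure is J = K ∘ cc. -/
def Kmat : Matrix Full Full ℂ :=
  Matrix.of fun p q =>
    (!![0, 1; 1, 0] : Matrix (Fin 2) (Fin 2) ℂ) p.1 q.1 *
      Kspin (p.2.1, p.2.2.1) (q.2.1, q.2.2.1) *
      (if p.2.2.2 = q.2.2.2 then 1 else 0)

/-- J T J⁻¹ = −K · conj(T) · conj(K) as a matrix operation. -/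
def Jconj (T : Matrix Full Full ℂ) : Matrix Full Full ℂ := -(Kmat * mconj T * mconj Kmat)

/-! ### Yukawa and Majorana parts of the Dirac operator -/

/-- 𝗄^I = diag(k_u^I, k_d^I). -/
def kdiag (kν ke ku kd : ℂ) (i : Fin 4) : Matrix (Fin 2) (Fin 2) ℂ :=
  if i = 0 then Matrix.diagonal ![kν, ke] else Matrix.diagonal ![ku, kd]

/-- Block-diagonal matrix on (I, α) from a family of flavour matrices. -/
def diagI (F : Fin 4 → Matrix Flav Flav ℂ) : Matrix Intl Intl ℂ :=
  Matrix.of fun p q => if p.1 = q.1 then F p.1 p.2 q.2 else 0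

/-- The Yukawa mass matrix D₀ = diag_I(D₀^I), D₀^I = [[0, conj 𝗄^I],[𝗄^I, 0]]. -/
def D0 (kν ke ku kd : ℂ) : Matrix Intl Intl ℂ :=
  diagI fun i => odB (mconj (kdiag kν ke ku kd i)) (kdiag kν ke ku kd i)

/-- η ⊗ X, with η = diag_s(1,−1) ⊗ I₂ on (s, ṡ) and X on (I, α). -/
def etaD (X : Matrix Intl Intl ℂ) : Matrix Half Half ℂ := dgB (liftI X) (liftI (-X))

/-- γ⁵ ⊗ D_Y = diag_C(η⊗D₀, η⊗D₀†). -/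
def g5DY (kν ke ku kd : ℂ) : Matrix Full Full ℂ :=
  dgB (etaD (D0 kν ke ku kd)) (etaD ((D0 kν ke ku kd)ᴴ))

/-- Ξ = diag(1,0,0,0)_I ⊗ diag(1,0,0,0)_α on (I, α). -/
def XiI : Matrix Intl Intl ℂ :=
  Matrix.of fun p q =>
    if p = q ∧ p.1 = 0 ∧ p.2 = ((0 : Fin 2), (0 : Fin 2)) then 1 else 0

/-- γ⁵ ⊗ D_M = [[0, η⊗D_R],[η⊗D_R†, 0]]_C with D_R = k_R Ξ. -/
def g5DM (kR : ℂ) : Matrix Full Full ℂ :=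
  odB (etaD (kR • XiI)) (etaD ((kR • XiI)ᴴ))

/-! ### The free 1-form -/

/-- Lift a spinor matrix (on (s, ṡ)) to ℂ¹²⁸, identity on C and (I, α). -/
def liftSpin (G : Matrix (Fin 2 × Fin 2) (Fin 2 × Fin 2) ℂ) : Matrix Full Full ℂ :=
  Matrix.of fun p q =>
    (if p.1 = q.1 ∧ p.2.2.2 = q.2.2.2 then 1 else 0) * G (p.2.1, p.2.2.1) (q.2.1, q.2.2.1)

/-- Q_μ = diag_s(Q^r_μ, Q^l_μ), Q^{r/l}_μ = diag(c^{r/l}, conj c^{r/l}, q^{r/l}),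
trivial on ṡ and I. -/
def freeQ (cr cl : ℂ) (qr ql : Matrix (Fin 2) (Fin 2) ℂ) : Matrix Half Half ℂ :=
  dgB (liftQ (dgB (cdiag cr) qr)) (liftQ (dgB (cdiag cl) ql))

/-- M_μ = diag_s(M^r_μ, M^l_μ), M^r_μ = diag_α(𝗆^r⊗I₂, 𝗆^l⊗I₂), 𝗆^{r/l} = diag(c^{r/l}, m^{r/l}),
trivial on ṡ. -/
def freeM (cr cl : ℂ) (mr ml : Matrix (Fin 3) (Fin 3) ℂ) : Matrix Half Half ℂ :=
  dgB (liftI (msect (sm4 cr mr) (sm4 cl ml))) (liftI (msect (sm4 cl ml) (sm4 cr mr)))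

/-- The free 1-form coefficient matrix A_μ = diag_C(Q_μ, M_μ). -/
def freeA (cr cl : ℂ) (qr ql : Matrix (Fin 2) (Fin 2) ℂ)
    (mr ml : Matrix (Fin 3) (Fin 3) ℂ) : Matrix Full Full ℂ :=
  dgB (freeQ cr cl qr ql) (freeM cr cl mr ml)

/-! ### Partial derivatives -/

/-- Partial derivative in the μ-th coordinate direction of ℝ⁴ (ℂ-valued). -/
def pdC (μ : Fin 4) (f : (Fin 4 → ℝ) → ℂ) (x : Fin 4 → ℝ) : ℂ :=
  fderiv ℝ f x (Pi.single μ 1)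

/-- Partial derivative in the μ-th coordinate direction of ℝ⁴ (ℝ-valued). -/
def pdR (μ : Fin 4) (f : (Fin 4 → ℝ) → ℝ) (x : Fin 4 → ℝ) : ℝ :=
  fderiv ℝ f x (Pi.single μ 1)

/-- Entrywise partial derivative of a matrix-valued function. -/
def pdM {m n : Type} (μ : Fin 4) (F : (Fin 4 → ℝ) → Matrix m n ℂ) (x : Fin 4 → ℝ) :
    Matrix m n ℂ :=
  Matrix.of fun i j => pdC μ (fun y => F y i j) x

open Kronecker

theorem linearIndependent_sum_smul_of_isUnit {R M ι : Type*} [CommRing R] [AddCommGroup M]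
    [Module R M] [Fintype ι] [DecidableEq ι] {v : ι → M} (hv : LinearIndependent R v)
    {A : Matrix ι ι R} (hA : IsUnit A) : LinearIndependent R fun i => ∑ j, A i j • v j := by
  have := (linearIndependent_rows_of_isUnit hA).map' (Fintype.linearCombination R v)
    (LinearMap.ker_eq_bot.mpr hv.fintypeLinearCombination_injective)
  simpa [Function.comp_def, Fintype.linearCombination_apply] using this

theorem sum_kronecker_eq_zero_iff {R ι m n p q : Type*} [CommRing R] [Fintype ι]
    {S : ι → Matrix m n R} (hS : LinearIndependent R S) (Z : ι → Matrix p q R) :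
    ∑ i, S i ⊗ₖ Z i = 0 ↔ ∀ i, Z i = 0 := by
  refine ⟨fun h i => ?_, fun h => by simp [h]⟩
  ext v w
  have hvw : ∑ j, Z j v w • S j = 0 := by
    ext a b
    simpa [Matrix.sum_apply, kroneckerMap_apply, mul_comm] using congrFun₂ h (a, v) (b, w)
  exact Fintype.linearIndependent_iff.mp hS (fun j => Z j v w) hvw i

theorem kronecker_neg {R l m n p : Type*} [Ring R] (A : Matrix l m R) (B : Matrix n p R) :
    A ⊗ₖ (-B) = -(A ⊗ₖ B) := by
  ext; simp [kroneckerMap_apply]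

theorem one_kronecker_inj {R m n : Type*} [Ring R] [Nonempty m] [DecidableEq m]
    {A B : Matrix n n R} : (1 : Matrix m m R) ⊗ₖ A = 1 ⊗ₖ B ↔ A = B := by
  refine ⟨fun h => ?_, congrArg _⟩
  obtain ⟨i⟩ := ‹Nonempty m›
  ext x y
  simpa [kroneckerMap_apply] using congrFun₂ h (i, x) (i, y)

theorem eq_neg_conjTranspose_comm {R n : Type*} [AddCommGroup R] [StarAddMonoid R]
    {A B : Matrix n n R} : A = -Bᴴ ↔ B = -Aᴴ := by
  constructor <;> rintro rfl <;> simp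

theorem eq_neg_conj_comm {c d : ℂ} : c = -starRingEnd ℂ d ↔ d = -starRingEnd ℂ c := by
  constructor <;> rintro rfl <;> simp

theorem isHermitian_neg_I_smul_iff {n : Type*} (X : Matrix n n ℂ) :
    ((-Complex.I) • X).IsHermitian ↔ Xᴴ = -X := by
  rw [IsHermitian, conjTranspose_smul, star_neg, Complex.star_def, Complex.conj_I, neg_neg,
    neg_smul, ← smul_neg, smul_right_inj Complex.I_ne_zero]

section Blocks

variable {m : Type}

theorem dgB_conjTranspose (A B : Matrix m m ℂ) : (dgB A B)ᴴ = dgB Aᴴ Bᴴ := by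
  ext ⟨i, x⟩ ⟨j, y⟩
  fin_cases i <;> fin_cases j <;> simp [dgB, conjTranspose_apply]

theorem odB_conjTranspose (A B : Matrix m m ℂ) : (odB A B)ᴴ = odB Bᴴ Aᴴ := by
  ext ⟨i, x⟩ ⟨j, y⟩
  fin_cases i <;> fin_cases j <;> simp [odB, conjTranspose_apply]

theorem dgB_neg (A B : Matrix m m ℂ) : -dgB A B = dgB (-A) (-B) := by
  ext ⟨i, x⟩ ⟨j, y⟩
  fin_cases i <;> fin_cases j <;> simp [dgB]

theorem odB_neg (A B : Matrix m m ℂ) : -odB A B = odB (-A) (-B) := by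
  ext ⟨i, x⟩ ⟨j, y⟩
  fin_cases i <;> fin_cases j <;> simp [odB]

theorem dgB_inj {A B C D : Matrix m m ℂ} : dgB A B = dgB C D ↔ A = C ∧ B = D := by
  refine ⟨fun h => ⟨?_, ?_⟩, fun ⟨hAC, hBD⟩ => hAC ▸ hBD ▸ rfl⟩ <;> ext x y
  · simpa [dgB] using congrFun₂ h (0, x) (0, y)
  · simpa [dgB] using congrFun₂ h (1, x) (1, y)

theorem odB_inj {A B C D : Matrix m m ℂ} : odB A B = odB C D ↔ A = C ∧ B = D := by
  refine ⟨fun h => ⟨?_, ?_⟩, fun ⟨hAC, hBD⟩ => hAC ▸ hBD ▸ rfl⟩ <;> ext x y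
  · simpa [odB] using congrFun₂ h (0, x) (1, y)
  · simpa [odB] using congrFun₂ h (1, x) (0, y)

theorem dgB_sum {ι : Type*} (s : Finset ι) (A B : ι → Matrix m m ℂ) :
    ∑ i ∈ s, dgB (A i) (B i) = dgB (∑ i ∈ s, A i) (∑ i ∈ s, B i) := by
  ext ⟨i, x⟩ ⟨j, y⟩
  fin_cases i <;> fin_cases j <;> simp [dgB, Matrix.sum_apply]

theorem odB_sum {ι : Type*} (s : Finset ι) (A B : ι → Matrix m m ℂ) :
    ∑ i ∈ s, odB (A i) (B i) = odB (∑ i ∈ s, A i) (∑ i ∈ s, B i) := by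
  ext ⟨i, x⟩ ⟨j, y⟩
  fin_cases i <;> fin_cases j <;> simp [odB, Matrix.sum_apply]

theorem odB_smul (c : ℂ) (A B : Matrix m m ℂ) : c • odB A B = odB (c • A) (c • B) := by
  ext ⟨i, x⟩ ⟨j, y⟩
  fin_cases i <;> fin_cases j <;> simp [odB]

variable [Fintype m]

theorem dgB_mul_dgB (A B C D : Matrix m m ℂ) : dgB A B * dgB C D = dgB (A * C) (B * D) := by
  ext ⟨i, x⟩ ⟨j, y⟩
  fin_cases i <;> fin_cases j <;> simp [dgB, mul_apply, Fintype.sum_prod_type]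

theorem odB_mul_dgB (A B C D : Matrix m m ℂ) : odB A B * dgB C D = odB (A * D) (B * C) := by
  ext ⟨i, x⟩ ⟨j, y⟩
  fin_cases i <;> fin_cases j <;>
    simp [dgB, odB, mul_apply, Fintype.sum_prod_type]

end Blocks

theorem cdiag_conjTranspose (c : ℂ) : (cdiag c)ᴴ = cdiag (starRingEnd ℂ c) := by
  ext i j
  fin_cases i <;> fin_cases j <;> simp [cdiag, conjTranspose_apply]

theorem cdiag_neg (c : ℂ) : -cdiag c = cdiag (-c) := by
  ext i j
  fin_cases i <;> fin_cases j <;> simp [cdiag]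

theorem cdiag_inj {c d : ℂ} : cdiag c = cdiag d ↔ c = d :=
  ⟨fun h => by simpa [cdiag] using congrFun₂ h 0 0, congrArg _⟩

theorem sm4_conjTranspose (c : ℂ) (m : Matrix (Fin 3) (Fin 3) ℂ) :
    (sm4 c m)ᴴ = sm4 (starRingEnd ℂ c) mᴴ := by
  ext i j
  by_cases hi : i = 0 <;> by_cases hj : j = 0 <;> simp [sm4, conjTranspose_apply, hi, hj]

theorem sm4_neg (c : ℂ) (m : Matrix (Fin 3) (Fin 3) ℂ) : -sm4 c m = sm4 (-c) (-m) := by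
  ext i j
  by_cases hi : i = 0 <;> by_cases hj : j = 0 <;> simp [sm4, hi, hj]

theorem sm4_inj {c d : ℂ} {m n : Matrix (Fin 3) (Fin 3) ℂ} :
    sm4 c m = sm4 d n ↔ c = d ∧ m = n := by
  refine ⟨fun h => ⟨by simpa [sm4] using congrFun₂ h 0 0, ?_⟩,
    fun ⟨hcd, hmn⟩ => hcd ▸ hmn ▸ rfl⟩
  ext i j
  have hpred : ∀ k : Fin 3, pred3 k.succ = k := fun k => Fin.ext (by simp [pred3])
  simpa [sm4, hpred] using congrFun₂ h i.succ j.succ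

theorem msect_conjTranspose (A B : Matrix (Fin 4) (Fin 4) ℂ) :
    (msect A B)ᴴ = msect Aᴴ Bᴴ := by
  ext ⟨i, a⟩ ⟨j, b⟩
  by_cases h : a = b
  · subst h; simp [msect, conjTranspose_apply, apply_ite (starRingEnd ℂ)]
  · simp [msect, conjTranspose_apply, h, Ne.symm h]

theorem msect_neg (A B : Matrix (Fin 4) (Fin 4) ℂ) : -msect A B = msect (-A) (-B) := by
  ext ⟨i, a⟩ ⟨j, b⟩
  by_cases h : a = b <;> by_cases hb : b.1 = 0 <;> simp [msect, h, hb]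

theorem msect_inj {A B C D : Matrix (Fin 4) (Fin 4) ℂ} :
    msect A B = msect C D ↔ A = C ∧ B = D := by
  refine ⟨fun h => ⟨?_, ?_⟩, fun ⟨hAC, hBD⟩ => hAC ▸ hBD ▸ rfl⟩ <;> ext i j
  · simpa [msect] using congrFun₂ h (i, (0, 0)) (j, (0, 0))
  · simpa [msect] using congrFun₂ h (i, (1, 0)) (j, (1, 0))

theorem liftQ_eq_kronecker (X : Matrix Flav Flav ℂ) :
    liftQ X = (1 : Matrix (Fin 2) (Fin 2) ℂ) ⊗ₖ ((1 : Matrix (Fin 4) (Fin 4) ℂ) ⊗ₖ X) := by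
  ext ⟨a, b, c⟩ ⟨a', b', c'⟩
  by_cases h1 : a = a' <;> by_cases h2 : b = b' <;>
    simp [liftQ, kroneckerMap_apply, one_apply, h1, h2]

theorem liftI_eq_kronecker (X : Matrix Intl Intl ℂ) :
    liftI X = (1 : Matrix (Fin 2) (Fin 2) ℂ) ⊗ₖ X := by
  ext ⟨a, b⟩ ⟨a', b'⟩
  by_cases h1 : a = a' <;> simp [liftI, kroneckerMap_apply, one_apply, h1]

theorem freeA_conjTranspose (cr cl : ℂ) (qr ql : Matrix (Fin 2) (Fin 2) ℂ)
    (mr ml : Matrix (Fin 3) (Fin 3) ℂ) :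
    (freeA cr cl qr ql mr ml)ᴴ =
      freeA (starRingEnd ℂ cr) (starRingEnd ℂ cl) qrᴴ qlᴴ mrᴴ mlᴴ := by
  simp only [freeA, freeQ, freeM, liftQ_eq_kronecker, liftI_eq_kronecker, dgB_conjTranspose,
    conjTranspose_kronecker, conjTranspose_one, cdiag_conjTranspose, msect_conjTranspose,
    sm4_conjTranspose]

theorem freeA_neg (cr cl : ℂ) (qr ql : Matrix (Fin 2) (Fin 2) ℂ)
    (mr ml : Matrix (Fin 3) (Fin 3) ℂ) :
    -freeA cr cl qr ql mr ml = freeA (-cr) (-cl) (-qr) (-ql) (-mr) (-ml) := by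
  simp only [freeA, freeQ, freeM, liftQ_eq_kronecker, liftI_eq_kronecker, dgB_neg,
    ← kronecker_neg, cdiag_neg, msect_neg, sm4_neg]

theorem freeA_inj {cr cl cr' cl' : ℂ} {qr ql qr' ql' : Matrix (Fin 2) (Fin 2) ℂ}
    {mr ml mr' ml' : Matrix (Fin 3) (Fin 3) ℂ} :
    freeA cr cl qr ql mr ml = freeA cr' cl' qr' ql' mr' ml' ↔
      (cr = cr' ∧ qr = qr') ∧ (cl = cl' ∧ ql = ql') ∧
        (cr = cr' ∧ mr = mr') ∧ (cl = cl' ∧ ml = ml') := by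
  simp only [freeA, freeQ, freeM, liftQ_eq_kronecker, liftI_eq_kronecker, dgB_inj,
    one_kronecker_inj, cdiag_inj, msect_inj, sm4_inj]
  tauto

theorem freeA_twist_eq_neg_conjTranspose_iff (cr cl : ℂ) (qr ql : Matrix (Fin 2) (Fin 2) ℂ)
    (mr ml : Matrix (Fin 3) (Fin 3) ℂ) :
    freeA cl cr ql qr ml mr = -(freeA cr cl qr ql mr ml)ᴴ ↔
      cl = -starRingEnd ℂ cr ∧ ql = -qrᴴ ∧ ml = -mrᴴ := by
  rw [freeA_conjTranspose, freeA_neg, freeA_inj, eq_neg_conj_comm (c := cr),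
    eq_neg_conjTranspose_comm (A := qr), eq_neg_conjTranspose_comm (A := mr)]
  tauto

theorem sigE_conjTranspose (α : Fin 4) : (sigE α)ᴴ = sigTE α := by
  fin_cases α <;> ext i j <;> fin_cases i <;> fin_cases j <;>
    simp [sigE, sigTE, pauli1, pauli2, pauli3, conjTranspose_apply, one_apply]

theorem sum_smul_sigE (g : Fin 4 → ℂ) :
    ∑ α, g α • sigE α =
      !![g 0 - Complex.I * g 3, -Complex.I * g 1 - g 2; -Complex.I * g 1 + g 2,
        g 0 + Complex.I * g 3] := by
  ext i j
  fin_cases i <;> fin_cases j <;> simp [Fin.sum_univ_four, sigE, pauli1, pauli2, pauli3] <;> ring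

theorem linearIndependent_sigE : LinearIndependent ℂ sigE := by
  refine Fintype.linearIndependent_iff.mpr fun g hg => ?_
  rw [sum_smul_sigE, ← Matrix.ext_iff] at hg
  have h00 : g 0 - Complex.I * g 3 = 0 := by simpa using hg 0 0
  have h01 : -Complex.I * g 1 - g 2 = 0 := by simpa using hg 0 1
  have h10 : -Complex.I * g 1 + g 2 = 0 := by simpa using hg 1 0
  have h11 : g 0 + Complex.I * g 3 = 0 := by simpa using hg 1 1
  intro i
  fin_cases i <;> simp only [Fin.zero_eta, Fin.mk_one, Fin.reduceFinMk]
  · linear_combination (h00 + h11) / 2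
  · linear_combination (Complex.I / 2) * (h01 + h10) + g 1 * Complex.I_sq
  · linear_combination (h10 - h01) / 2
  · linear_combination (-Complex.I / 2) * (h11 - h00) + g 3 * Complex.I_sq

/-- The curved Pauli matrices `σ^μ = e^μ_α σ^α_E`, the upper-right block of `γ^μ`. -/
def frameSigma (e : Matrix (Fin 4) (Fin 4) ℝ) (μ : Fin 4) : Matrix (Fin 2) (Fin 2) ℂ :=
  ∑ α, (e μ α : ℂ) • sigE α

theorem linearIndependent_frameSigma {e : Matrix (Fin 4) (Fin 4) ℝ} (he : IsUnit e) :
    LinearIndependent ℂ (frameSigma e) :=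
  linearIndependent_sum_smul_of_isUnit linearIndependent_sigE
    (A := e.map (↑)) (he.map (algebraMap ℝ ℂ).mapMatrix)

theorem sum_smul_gammaE (e : Matrix (Fin 4) (Fin 4) ℝ) (μ : Fin 4) :
    ∑ α, (e μ α : ℂ) • gammaE α = odB (frameSigma e μ) (frameSigma e μ)ᴴ := by
  simp only [gammaE, odB_smul, odB_sum, frameSigma, conjTranspose_sum, conjTranspose_smul,
    sigE_conjTranspose, Complex.star_def, Complex.conj_ofReal]

theorem liftSpin_odB (A B : Matrix (Fin 2) (Fin 2) ℂ) :
    liftSpin (odB A B) =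
      dgB (odB (A ⊗ₖ (1 : Matrix Intl Intl ℂ)) (B ⊗ₖ 1)) (odB (A ⊗ₖ 1) (B ⊗ₖ 1)) := by
  ext ⟨c, s, ds, v⟩ ⟨c', s', ds', w⟩
  fin_cases c <;> fin_cases c' <;> fin_cases s <;> fin_cases s' <;>
    simp [liftSpin, odB, dgB, kroneckerMap_apply, one_apply, mul_comm]

theorem liftSpin_odB_mul_freeA (A B : Matrix (Fin 2) (Fin 2) ℂ) (cr cl : ℂ)
    (qr ql : Matrix (Fin 2) (Fin 2) ℂ) (mr ml : Matrix (Fin 3) (Fin 3) ℂ) :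
    liftSpin (odB A B) * freeA cr cl qr ql mr ml =
      dgB
        (odB (A ⊗ₖ ((1 : Matrix (Fin 4) (Fin 4) ℂ) ⊗ₖ dgB (cdiag cl) ql))
          (B ⊗ₖ ((1 : Matrix (Fin 4) (Fin 4) ℂ) ⊗ₖ dgB (cdiag cr) qr)))
        (odB (A ⊗ₖ msect (sm4 cl ml) (sm4 cr mr)) (B ⊗ₖ msect (sm4 cr mr) (sm4 cl ml))) := by
  simp only [liftSpin_odB, freeA, freeQ, freeM, liftQ_eq_kronecker, liftI_eq_kronecker,
    dgB_mul_dgB, odB_mul_dgB, ← mul_kronecker_mul, mul_one, one_mul]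

theorem odB_conjTranspose_eq_neg_iff {m : Type} (P Q : Matrix m m ℂ) :
    (odB P Q)ᴴ = -odB P Q ↔ Qᴴ = -P := by
  rw [odB_conjTranspose, odB_neg, odB_inj, and_iff_left_iff_imp]
  intro h
  rw [← neg_neg P, ← h, conjTranspose_neg, conjTranspose_conjTranspose]

theorem odB_sum_kronecker_conjTranspose_eq_neg_iff {ι m n : Type} [Fintype ι]
    {S : ι → Matrix m m ℂ} (hS : LinearIndependent ℂ S) (L R : ι → Matrix n n ℂ) :
    (odB (∑ i, S i ⊗ₖ L i) (∑ i, (S i)ᴴ ⊗ₖ R i))ᴴ =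
        -odB (∑ i, S i ⊗ₖ L i) (∑ i, (S i)ᴴ ⊗ₖ R i) ↔
      ∀ i, L i = -(R i)ᴴ := by
  rw [odB_conjTranspose_eq_neg_iff, conjTranspose_sum, eq_neg_iff_add_eq_zero,
    ← Finset.sum_add_distrib]
  simp only [conjTranspose_kronecker, conjTranspose_conjTranspose, ← kronecker_add,
    sum_kronecker_eq_zero_iff hS, add_eq_zero_iff_eq_neg']

theorem isHermitian_slash_freeA_iff {e : Matrix (Fin 4) (Fin 4) ℝ} (he : IsUnit e)
    (cr cl : Fin 4 → ℂ) (qr ql : Fin 4 → Matrix (Fin 2) (Fin 2) ℂ)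
    (mr ml : Fin 4 → Matrix (Fin 3) (Fin 3) ℂ) :
    ((-Complex.I) • ∑ μ, liftSpin (∑ α, (e μ α : ℂ) • gammaE α) *
        freeA (cr μ) (cl μ) (qr μ) (ql μ) (mr μ) (ml μ)).IsHermitian ↔
      ∀ μ, cl μ = -starRingEnd ℂ (cr μ) ∧ ql μ = -(qr μ)ᴴ ∧ ml μ = -(mr μ)ᴴ := by
  simp only [isHermitian_neg_I_smul_iff, sum_smul_gammaE, liftSpin_odB_mul_freeA, dgB_sum,
    odB_sum, dgB_conjTranspose, dgB_neg, dgB_inj,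
    odB_sum_kronecker_conjTranspose_eq_neg_iff (linearIndependent_frameSigma he), ← forall_and]
  refine forall_congr' fun μ => ?_
  simp only [conjTranspose_kronecker, conjTranspose_one, ← kronecker_neg, one_kronecker_inj,
    dgB_conjTranspose, dgB_neg, dgB_inj, cdiag_conjTranspose, cdiag_neg, cdiag_inj,
    msect_conjTranspose, msect_neg, msect_inj, sm4_conjTranspose, sm4_neg, sm4_inj]
  rw [eq_neg_conj_comm (c := cr μ), eq_neg_conjTranspose_comm (A := mr μ)]
  tauto

/-- selfadjointness of the free 1-form A̸ = −i Σ_μ (γ^μ⊗I₃₂)·A_μ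
(γ^μ = Σ_α e^μ_α γ^α_E, e real invertible) is equivalent to ρ(A_μ) = −A_μ† for all μ,
which is equivalent to c^l_μ = −conj(c^r_μ), q^l_μ = −(q^r_μ)†, m^l_μ = −(m^r_μ)†. -/
theorem statement12 (e : Matrix (Fin 4) (Fin 4) ℝ) (he : IsUnit e)
    (cr cl : Fin 4 → ℂ) (qr ql : Fin 4 → Matrix (Fin 2) (Fin 2) ℂ)
    (mr ml : Fin 4 → Matrix (Fin 3) (Fin 3) ℂ) :
    (((-Complex.I) • ∑ μ, liftSpin (∑ α, (e μ α : ℂ) • gammaE α) *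
        freeA (cr μ) (cl μ) (qr μ) (ql μ) (mr μ) (ml μ)).IsHermitian
      ↔ ∀ μ, freeA (cl μ) (cr μ) (ql μ) (qr μ) (ml μ) (mr μ)
          = -(freeA (cr μ) (cl μ) (qr μ) (ql μ) (mr μ) (ml μ))ᴴ) ∧
    ((∀ μ, freeA (cl μ) (cr μ) (ql μ) (qr μ) (ml μ) (mr μ)
          = -(freeA (cr μ) (cl μ) (qr μ) (ql μ) (mr μ) (ml μ))ᴴ)
      ↔ ∀ μ, cl μ = -(starRingEnd ℂ) (cr μ) ∧ ql μ = -(qr μ)ᴴ ∧ ml μ = -(mr μ)ᴴ) := by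
  have hTwist := fun μ => freeA_twist_eq_neg_conjTranspose_iff (cr μ) (cl μ) (qr μ) (ql μ)
    (mr μ) (ml μ)
  exact ⟨(isHermitian_slash_freeA_iff he cr cl qr ql mr ml).trans
    (forall_congr' fun μ => (hTwist μ).symm), forall_congr' hTwist⟩

end TwistSM
end
end

section
/- Suppose the selfadjoint free 1-form components are parametrized, for nonzero reals g₁, g₂, g₃, as c^r_μ = a_μ − i(g₁/2)B_μ with a_μ, B_μ ∈ ℝ; q^r_μ = w_μ·I₂ − i(g₂/2)W_μ with w_μ ∈ ℝ and W_μ a traceless Hermitian 2×2 matrix; m^r_μ = g_μ + iV⁰_μ·I₃ + i(g₃/2)V_μ with g_μ Hermitian 3×3, V⁰_μ ∈ ℝ and V_μ traceless Hermitian 3×3; and c^l_μ = −conj(c^r_μ), q^l_μ = −(q^r_μ)†, m^l_μ = −(m^r_μ)†. Then Tr(Q^r_μ) + Tr(Q^l_μ) = 0 and Tr(M^r_μ) + Tr(M^l_μ) = 4i(6V⁰_μ − g₁B_μ); consequently the unimodularity condition Tr(Q^r_μ) + Tr(Q^l_μ) + Tr(M^r_μ) + Tr(M^l_μ) = 0 holds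 if and only if V⁰_μ = (g₁/6)B_μ. -/
open Matrix

noncomputable section

namespace TwistSM

lemma trace_dgB {m : Type} [Fintype m] [DecidableEq m] (A B : Matrix m m ℂ) :
    (dgB A B).trace = A.trace + B.trace := by
  simp [Matrix.trace, dgB, Fintype.sum_prod_type, Fin.sum_univ_two, Matrix.diag]

lemma trace_cdiag (c : ℂ) : (cdiag c).trace = c + (starRingEnd ℂ) c := by
  simp [cdiag, Matrix.trace, Fin.sum_univ_two]

lemma trace_msect (A B : Matrix (Fin 4) (Fin 4) ℂ) :
    (msect A B).trace = 2 * A.trace + 2 * B.trace := by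
  simp [Matrix.trace, msect, Fintype.sum_prod_type, Fin.sum_univ_two, Fin.sum_univ_four,
    Matrix.diag]
  ring

lemma trace_sm4 (c : ℂ) (m : Matrix (Fin 3) (Fin 3) ℂ) :
    (sm4 c m).trace = c + m.trace := by
  simp [Matrix.trace, sm4, Fin.sum_univ_four, Fin.sum_univ_three, Matrix.diag,
    show pred3 1 = 0 from rfl, show pred3 2 = 1 from rfl, show pred3 3 = 2 from rfl]
  ring


/-- with the physical parametrization of a selfadjoint free 1-form,
Tr Q^r_μ + Tr Q^l_μ = 0 and Tr M^r_μ + Tr M^l_μ = 4i(6V⁰_μ − g₁B_μ); hence the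
unimodularity condition holds iff V⁰_μ = (g₁/6)B_μ. -/
theorem statement13 (g1 g2 g3 : ℝ) (hg1 : g1 ≠ 0) (hg2 : g2 ≠ 0) (hg3 : g3 ≠ 0)
    (aa B w V0 : Fin 4 → ℝ)
    (W : Fin 4 → Matrix (Fin 2) (Fin 2) ℂ) (gH V : Fin 4 → Matrix (Fin 3) (Fin 3) ℂ)
    (hW : ∀ μ, (W μ).IsHermitian ∧ (W μ).trace = 0)
    (hgH : ∀ μ, (gH μ).IsHermitian)
    (hV : ∀ μ, (V μ).IsHermitian ∧ (V μ).trace = 0)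
    (μ : Fin 4) :
    let cr : ℂ := (aa μ : ℂ) - Complex.I * ((g1 : ℂ)/2) * (B μ : ℂ)
    let qr : Matrix (Fin 2) (Fin 2) ℂ := (w μ : ℂ) • 1 - (Complex.I * ((g2 : ℂ)/2)) • W μ
    let mr : Matrix (Fin 3) (Fin 3) ℂ :=
      gH μ + (Complex.I * (V0 μ : ℂ)) • 1 + (Complex.I * ((g3 : ℂ)/2)) • V μ
    let cl : ℂ := -(starRingEnd ℂ) cr
    let ql : Matrix (Fin 2) (Fin 2) ℂ := -qrᴴ
    let ml : Matrix (Fin 3) (Fin 3) ℂ := -mrᴴ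
    let Qrm : Matrix Flav Flav ℂ := dgB (cdiag cr) qr
    let Qlm : Matrix Flav Flav ℂ := dgB (cdiag cl) ql
    let Mrm : Matrix Intl Intl ℂ := msect (sm4 cr mr) (sm4 cl ml)
    let Mlm : Matrix Intl Intl ℂ := msect (sm4 cl ml) (sm4 cr mr)
    Qrm.trace + Qlm.trace = 0 ∧
    Mrm.trace + Mlm.trace = 4 * Complex.I * (6 * (V0 μ : ℂ) - (g1 : ℂ) * (B μ : ℂ)) ∧
    (Qrm.trace + Qlm.trace + Mrm.trace + Mlm.trace = 0 ↔ V0 μ = g1/6 * B μ) := by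
  intro cr qr mr cl ql ml Qrm Qlm Mrm Mlm
  have hgHt : (starRingEnd ℂ) (gH μ).trace = (gH μ).trace := by
    rw [show (starRingEnd ℂ) (gH μ).trace = (gH μ)ᴴ.trace from
      (Matrix.trace_conjTranspose _).symm, (hgH μ)]
  have hqr : qr.trace = 2 * (w μ : ℂ) := by
    simp [qr, Matrix.trace_sub, Matrix.trace_smul, Matrix.trace_one, (hW μ).2]
    ring
  have hql : ql.trace = -(2 * (w μ : ℂ)) := by
    simp [ql, Matrix.trace_neg, Matrix.trace_conjTranspose, hqr]
  have hmr : mr.trace = (gH μ).trace + 3 * Complex.I * (V0 μ : ℂ) := by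
    simp [mr, Matrix.trace_add, Matrix.trace_smul, Matrix.trace_one, (hV μ).2]
    ring
  have hml : ml.trace = -((gH μ).trace - 3 * Complex.I * (V0 μ : ℂ)) := by
    simp [ml, Matrix.trace_neg, Matrix.trace_conjTranspose, hmr, hgHt, _root_.map_add, _root_.map_mul, map_ofNat, map_div₀,
      Complex.conj_I, Complex.conj_ofReal]
    ring
  have hcl : cl = -((aa μ : ℂ) + Complex.I * ((g1 : ℂ)/2) * (B μ : ℂ)) := by
    simp [cl, cr, _root_.map_sub, _root_.map_mul, map_ofNat, map_div₀, Complex.conj_I, Complex.conj_ofReal]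
  have hQ : Qrm.trace + Qlm.trace = 0 := by
    rw [show Qrm = dgB (cdiag cr) qr from rfl, show Qlm = dgB (cdiag cl) ql from rfl,
      trace_dgB, trace_dgB, trace_cdiag, trace_cdiag, hqr, hql, hcl]
    simp [cr, _root_.map_sub, _root_.map_add, _root_.map_mul, map_ofNat, map_div₀, Complex.conj_I, Complex.conj_ofReal]
    ring
  have hM : Mrm.trace + Mlm.trace = 4 * Complex.I * (6 * (V0 μ : ℂ) - (g1 : ℂ) * (B μ : ℂ)) := by
    rw [show Mrm = msect (sm4 cr mr) (sm4 cl ml) from rfl,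
      show Mlm = msect (sm4 cl ml) (sm4 cr mr) from rfl,
      trace_msect, trace_msect, trace_sm4, trace_sm4, hmr, hml, hcl]
    simp only [cr]
    ring
  refine ⟨hQ, hM, ?_⟩
  rw [hQ, zero_add, hM]
  constructor
  · intro h
    have h2 : (6 * (V0 μ : ℂ) - (g1 : ℂ) * (B μ : ℂ)) = 0 := by
      have h4 : (4 : ℂ) * Complex.I ≠ 0 := by simp [Complex.I_ne_zero]
      exact mul_left_cancel₀ h4 (by rw [h, mul_zero])
    have h3 : (6 : ℝ) * V0 μ - g1 * B μ = 0 := by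
      exact_mod_cast (by push_cast at h2 ⊢; exact h2 : ((6 * V0 μ - g1 * B μ : ℝ) : ℂ) = 0)
    field_simp
    linarith
  · intro h
    rw [h]
    push_cast
    ring



end TwistSM
end
end

section
/- Let g₁, g₂, g₃ be nonzero reals, let α : ℝ⁴ → ℝ, 𝗊 : ℝ⁴ → SU(2), 𝗇 : ℝ⁴ → SU(3) be differentiable, and set 𝗆 := e^{−iα/3}·𝗇. Let a_μ, B_μ, w_μ : ℝ⁴ → ℝ, W_μ : ℝ⁴ → {traceless Hermitian 2×2 matrices}, g_μ : ℝ⁴ → {Hermitian 3×3 matrices}, V_μ : ℝ⁴ → {traceless Hermitian 3×3 matrices} be differentiable, and define c^r_μ := a_μ − i(g₁/2)B_μ, q^r_μ := w_μI₂ − i(g₂/2)W_μ, m^r_μ := g_μ + i((g₁/6)B_μI₃ + (g₃/2)V_μ). Then the gauge-transformed components satisfy: c^r_μ − i∂_μα = a_μ − i(g₁/2)B′_μ with B′_μ := B_μ + (2/g₁)∂_μα; 𝗊q^r_μ𝗊† + 𝗊(∂_μ𝗊†) = w_μI₂ − i(g₂/2)W′_μ with W′_μ := 𝗊W_μ𝗊†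 + (2i/g₂)𝗊(∂_μ𝗊†) traceless Hermitian; and 𝗆m^r_μ𝗆† + 𝗆(∂_μ𝗆†) = g′_μ + i((g₁/6)B′_μI₃ + (g₃/2)V′_μ) with g′_μ := 𝗇g_μ𝗇† Hermitian and V′_μ := 𝗇V_μ𝗇† − (2i/g₃)𝗇(∂_μ𝗇†) traceless Hermitian. In particular the fields a_μ and w_μ are gauge invariant, g_μ transforms algebraically by conjugation, and B_μ, W_μ, V_μ transform as the Standard Model gauge fields. -/
/-! For a differentiable SU(n)-valued 𝗎, the pure-gauge term 𝗎 ∂_μ𝗎† is anti-Hermitian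
(differentiate 𝗎𝗎† = 1) and traceless (Jacobi's formula ∂_μ det 𝗎 = tr(adj 𝗎 ∂_μ𝗎), with
adj 𝗎 = 𝗎† and det 𝗎 = 1). Hence (2i/g) 𝗎 ∂_μ𝗎† is traceless Hermitian, and conjugating a
traceless Hermitian field by 𝗎 and adding it keeps the field traceless Hermitian. For
𝗆 = e^{−iα/3}𝗇 the phase cancels in 𝗆 X 𝗆† and contributes (i/3) ∂_μα · I₃ to 𝗆 ∂_μ𝗆†; this
term is absorbed by the hypercharge field through B ↦ B + (2/g₁) ∂_μα. The remaining identities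
are linear algebra with i² = −1. -/

open Matrix

noncomputable section

namespace TwistSM

variable {μ : Fin 4} {x : Fin 4 → ℝ}

lemma pdC_const (c : ℂ) : pdC μ (fun _ => c) x = 0 := by simp [pdC]

lemma pdC_mul {f g : (Fin 4 → ℝ) → ℂ} (hf : DifferentiableAt ℝ f x)
    (hg : DifferentiableAt ℝ g x) :
    pdC μ (fun y => f y * g y) x = pdC μ f x * g x + f x * pdC μ g x := by
  simp only [pdC, fderiv_fun_mul hf hg, _root_.add_apply, _root_.smul_apply, smul_eq_mul]
  ring

lemma pdC_sum {ι : Type*} (s : Finset ι) {f : ι → (Fin 4 → ℝ) → ℂ}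
    (hf : ∀ i ∈ s, DifferentiableAt ℝ (f i) x) :
    pdC μ (fun y => ∑ i ∈ s, f i y) x = ∑ i ∈ s, pdC μ (f i) x := by
  simp [pdC, (HasFDerivAt.fun_sum fun i hi => (hf i hi).hasFDerivAt).fderiv]

lemma pdC_prod {ι : Type*} [DecidableEq ι] (s : Finset ι) {f : ι → (Fin 4 → ℝ) → ℂ}
    (hf : ∀ i ∈ s, DifferentiableAt ℝ (f i) x) :
    pdC μ (fun y => ∏ i ∈ s, f i y) x
      = ∑ i ∈ s, (∏ j ∈ s.erase i, f j x) * pdC μ (f i) x := by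
  simp [pdC, (HasFDerivAt.finsetProd fun i hi => (hf i hi).hasFDerivAt).fderiv, smul_eq_mul]

lemma pdC_star {f : (Fin 4 → ℝ) → ℂ} (hf : DifferentiableAt ℝ f x) :
    pdC μ (fun y => star (f y)) x = star (pdC μ f x) := by
  rw [pdC, hf.hasFDerivAt.star.fderiv]
  rfl

lemma pdC_cexp {f : (Fin 4 → ℝ) → ℂ} (hf : DifferentiableAt ℝ f x) :
    pdC μ (fun y => Complex.exp (f y)) x = Complex.exp (f x) * pdC μ f x := by
  simp [pdC, hf.hasFDerivAt.cexp.fderiv]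

lemma pdC_const_mul_ofReal (c : ℂ) {f : (Fin 4 → ℝ) → ℝ} (hf : DifferentiableAt ℝ f x) :
    pdC μ (fun y => c * (f y : ℂ)) x = c * (pdR μ f x : ℂ) := by
  have hc : HasFDerivAt (fun y => c * (f y : ℂ)) (c • Complex.ofRealCLM.comp (fderiv ℝ f x)) x :=
    (Complex.ofRealCLM.hasFDerivAt.comp x hf.hasFDerivAt).const_mul c
  simp [pdC, pdR, hc.fderiv]

lemma pdM_mul {l m p : Type} [Fintype m] {F : (Fin 4 → ℝ) → Matrix l m ℂ}
    {G : (Fin 4 → ℝ) → Matrix m p ℂ}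
    (hF : ∀ i j, DifferentiableAt ℝ (fun y => F y i j) x)
    (hG : ∀ i j, DifferentiableAt ℝ (fun y => G y i j) x) :
    pdM μ (fun y => F y * G y) x = pdM μ F x * G x + F x * pdM μ G x := by
  ext i j
  simp only [pdM, Matrix.of_apply, Matrix.add_apply, Matrix.mul_apply]
  rw [pdC_sum _ fun k _ => (hF i k).fun_mul (hG k j), ← Finset.sum_add_distrib]
  exact Finset.sum_congr rfl fun k _ => pdC_mul (hF i k) (hG k j)

lemma pdM_conjTranspose {l m : Type} {F : (Fin 4 → ℝ) → Matrix l m ℂ}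
    (hF : ∀ i j, DifferentiableAt ℝ (fun y => F y i j) x) :
    pdM μ (fun y => (F y)ᴴ) x = (pdM μ F x)ᴴ := by
  ext i j
  exact pdC_star (hF j i)

lemma pdM_smul {l m : Type} {f : (Fin 4 → ℝ) → ℂ} {F : (Fin 4 → ℝ) → Matrix l m ℂ}
    (hf : DifferentiableAt ℝ f x)
    (hF : ∀ i j, DifferentiableAt ℝ (fun y => F y i j) x) :
    pdM μ (fun y => f y • F y) x = pdC μ f x • F x + f x • pdM μ F x := by
  ext i j
  exact pdC_mul hf (hF i j)

lemma trace_adjugate_mul_eq_sum_det_updateCol {R n : Type*} [CommRing R] [Fintype n]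
    [DecidableEq n] (A D : Matrix n n R) :
    (A.adjugate * D).trace = ∑ i, (A.updateCol i fun k => D k i).det := by
  refine Finset.sum_congr rfl fun i _ => ?_
  rw [Matrix.diag_apply, Matrix.mul_apply, ← Matrix.cramer_apply,
    Matrix.cramer_eq_adjugate_mulVec]
  rfl

lemma det_updateCol_eq_sum_perm {R n : Type*} [CommRing R] [Fintype n] [DecidableEq n]
    (A : Matrix n n R) (i : n) (c : n → R) :
    (A.updateCol i c).det
      = ∑ σ : Equiv.Perm n,
          (Equiv.Perm.sign σ : R) * ((∏ j ∈ Finset.univ.erase i, A (σ j) j) * c (σ i)) := by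
  rw [Matrix.det_apply']
  refine Finset.sum_congr rfl fun σ _ => ?_
  rw [← Finset.prod_erase_mul _ _ (Finset.mem_univ i), Matrix.updateCol_self]
  congr 2
  exact Finset.prod_congr rfl fun j hj => Matrix.updateCol_ne (Finset.ne_of_mem_erase hj)

lemma pdC_det {n : Type} [Fintype n] [DecidableEq n] {A : (Fin 4 → ℝ) → Matrix n n ℂ}
    (hA : ∀ i j, DifferentiableAt ℝ (fun y => A y i j) x) :
    pdC μ (fun y => (A y).det) x = ((A x).adjugate * pdM μ A x).trace := by
  have hprod (σ : Equiv.Perm n) : DifferentiableAt ℝ (fun y => ∏ i, A y (σ i) i) x :=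
    (HasFDerivAt.finsetProd fun i _ => (hA (σ i) i).hasFDerivAt).differentiableAt
  simp_rw [Matrix.det_apply', trace_adjugate_mul_eq_sum_det_updateCol, det_updateCol_eq_sum_perm]
  rw [pdC_sum _ fun σ _ => (differentiableAt_const _).fun_mul (hprod σ), Finset.sum_comm]
  refine Finset.sum_congr rfl fun σ _ => ?_
  rw [pdC_mul (differentiableAt_const _) (hprod σ), pdC_const, zero_mul, zero_add,
    pdC_prod _ fun i _ => hA (σ i) i, Finset.mul_sum]
  rfl

section SpecialUnitary

variable {ι : Type} [Fintype ι] [DecidableEq ι] {U : (Fin 4 → ℝ) → Matrix ι ι ℂ}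

lemma adjugate_eq_conjTranspose {A : Matrix ι ι ℂ} (hA : Aᴴ * A = 1) (hdet : A.det = 1) :
    A.adjugate = Aᴴ := by
  rw [← Matrix.inv_eq_left_inv hA, Matrix.inv_def, hdet, Ring.inverse_one, one_smul]

lemma pdM_mul_conjTranspose_add_mul_pdM_conjTranspose (hU : ∀ y, (U y)ᴴ * U y = 1)
    (hUd : ∀ i j, DifferentiableAt ℝ (fun y => U y i j) x) :
    pdM μ U x * (U x)ᴴ + U x * pdM μ (fun y => (U y)ᴴ) x = 0 := by
  have hUU : (fun y => U y * (U y)ᴴ) = fun _ => 1 := funext fun y => mul_eq_one_comm.mp (hU y)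
  rw [← pdM_mul (G := fun y => (U y)ᴴ) hUd fun i j => (hUd j i).star, hUU]
  ext i j
  exact pdC_const _

lemma conjTranspose_mul_pdM_conjTranspose (hU : ∀ y, (U y)ᴴ * U y = 1)
    (hUd : ∀ i j, DifferentiableAt ℝ (fun y => U y i j) x) :
    (U x * pdM μ (fun y => (U y)ᴴ) x)ᴴ = -(U x * pdM μ (fun y => (U y)ᴴ) x) := by
  rw [Matrix.conjTranspose_mul, pdM_conjTranspose hUd, Matrix.conjTranspose_conjTranspose,
    eq_neg_iff_add_eq_zero, ← pdM_conjTranspose hUd]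
  exact pdM_mul_conjTranspose_add_mul_pdM_conjTranspose hU hUd

lemma trace_mul_pdM_conjTranspose (hU : ∀ y, (U y)ᴴ * U y = 1) (hdet : ∀ y, (U y).det = 1)
    (hUd : ∀ i j, DifferentiableAt ℝ (fun y => U y i j) x) :
    (U x * pdM μ (fun y => (U y)ᴴ) x).trace = 0 := by
  have hdet' : pdC μ (fun y => (U y).det) x = 0 := by
    simp_rw [hdet]
    exact pdC_const 1
  rw [pdC_det hUd, adjugate_eq_conjTranspose (hU x) (hdet x), Matrix.trace_mul_comm] at hdet'
  rw [eq_neg_of_add_eq_zero_right (pdM_mul_conjTranspose_add_mul_pdM_conjTranspose hU hUd),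
    Matrix.trace_neg, hdet', neg_zero]

end SpecialUnitary

section GaugeTransformation

open Complex

lemma exp_neg_I_mul_div_three_mul_star (t : ℝ) :
    exp (-(I * t) / 3) * star (exp (-(I * t) / 3)) = 1 := by
  have hstar : star (exp (-(I * t) / 3)) = exp (-(-(I * t) / 3)) := by
    rw [star_def, ← exp_conj]
    congr 1
    simp only [map_div₀, map_neg, map_mul, conj_I, conj_ofReal, map_ofNat]
    ring
  rw [hstar, ← exp_add, add_neg_cancel, exp_zero]

lemma exp_neg_I_mul_div_three_mul_star_pdC {α : (Fin 4 → ℝ) → ℝ} (hα : DifferentiableAt ℝ α x) :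
    exp (-(I * α x) / 3) * star (pdC μ (fun y => exp (-(I * α y) / 3)) x)
      = I * pdR μ α x / 3 := by
  have hlin : (fun y => -(I * α y) / 3) = fun y => (-I / 3) * (α y : ℂ) :=
    funext fun y => by ring
  have hd : DifferentiableAt ℝ (fun y => -(I * α y) / 3) x := by fun_prop
  rw [pdC_cexp hd, hlin, pdC_const_mul_ofReal _ hα, star_mul', ← mul_assoc,
    exp_neg_I_mul_div_three_mul_star, one_mul]
  simp only [star_mul', star_div₀, star_neg, RCLike.star_def, conj_I, neg_neg, star_ofNat,
    conj_ofReal]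
  ring

variable {ι : Type} [Fintype ι]

lemma smul_mul_pdM_conjTranspose_smul {φ : (Fin 4 → ℝ) → ℂ} {U : (Fin 4 → ℝ) → Matrix ι ι ℂ}
    (hφ : DifferentiableAt ℝ φ x) (hUd : ∀ i j, DifferentiableAt ℝ (fun y => U y i j) x) :
    (φ x • U x) * pdM μ (fun y => (φ y • U y)ᴴ) x
      = (φ x * star (pdC μ φ x)) • (U x * (U x)ᴴ)
        + (φ x * star (φ x)) • (U x * pdM μ (fun y => (U y)ᴴ) x) := by
  simp_rw [Matrix.conjTranspose_smul]
  rw [pdM_smul (F := fun y => (U y)ᴴ) hφ.star fun i j => (hUd j i).star, pdC_star hφ]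
  simp only [Matrix.smul_mul, Matrix.mul_add, Matrix.mul_smul, smul_smul]
  rw [mul_comm (star (pdC μ φ x)), mul_comm (star (φ x))]

lemma smul_mul_mul_conjTranspose_smul (a : ℂ) (U X : Matrix ι ι ℂ) :
    (a • U) * X * (a • U)ᴴ = (a * star a) • (U * X * Uᴴ) := by
  rw [Matrix.conjTranspose_smul, Matrix.smul_mul, Matrix.smul_mul, Matrix.mul_smul, smul_smul]

lemma star_two_mul_I_div_ofReal (g : ℝ) : star (2 * I / g) = -(2 * I / g) := by
  simp only [star_div₀, star_mul', RCLike.star_def, conj_I, star_ofNat, conj_ofReal]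
  ring

lemma isHermitian_conj_add_smul {U X A : Matrix ι ι ℂ} {c : ℂ} (hX : X.IsHermitian)
    (hA : Aᴴ = -A) (hc : star c = -c) : (U * X * Uᴴ + c • A).IsHermitian :=
  (Matrix.isHermitian_mul_mul_conjTranspose U hX).add <| by
    rw [Matrix.IsHermitian, Matrix.conjTranspose_smul, hA, hc, neg_smul_neg]

lemma trace_conj_add_smul [DecidableEq ι] {U X A : Matrix ι ι ℂ} (hU : Uᴴ * U = 1)
    (hX : X.trace = 0) (hA : A.trace = 0) (c : ℂ) : (U * X * Uᴴ + c • A).trace = 0 := by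
  rw [Matrix.trace_add, Matrix.trace_smul, Matrix.trace_mul_cycle, hU, Matrix.one_mul, hX, hA,
    smul_zero, add_zero]

lemma gaugeTransform_weak_component [DecidableEq ι] {U X A : Matrix ι ι ℂ} (hU : U * Uᴴ = 1)
    (w : ℂ) {g : ℝ} (hg : g ≠ 0) :
    U * (w • 1 - (I * (g / 2)) • X) * Uᴴ + A
      = w • 1 - (I * (g / 2)) • (U * X * Uᴴ + (2 * I / g) • A) := by
  have hg' : (g : ℂ) ≠ 0 := ofReal_ne_zero.mpr hg
  simp only [Matrix.mul_sub, Matrix.sub_mul, Matrix.mul_smul, Matrix.smul_mul, Matrix.mul_one,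
    hU, smul_add, smul_smul]
  match_scalars <;> field_simp
  rw [I_sq, neg_neg]

lemma gaugeTransform_strong_component [DecidableEq ι] {U G X A : Matrix ι ι ℂ}
    (hU : U * Uᴴ = 1) (b d : ℝ) {g1 g3 : ℝ} (hg1 : g1 ≠ 0) (hg3 : g3 ≠ 0) :
    U * (G + I • (((g1 : ℂ) / 6 * b) • 1 + ((g3 : ℂ) / 2) • X)) * Uᴴ + ((I * d / 3) • 1 + A)
      = U * G * Uᴴ + I • (((g1 : ℂ) / 6 * ((b + 2 / g1 * d : ℝ) : ℂ)) • 1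
          + ((g3 : ℂ) / 2) • (U * X * Uᴴ - (2 * I / g3) • A)) := by
  have hg1' : (g1 : ℂ) ≠ 0 := ofReal_ne_zero.mpr hg1
  have hg3' : (g3 : ℂ) ≠ 0 := ofReal_ne_zero.mpr hg3
  simp only [Matrix.mul_add, Matrix.add_mul, Matrix.mul_smul, Matrix.smul_mul, Matrix.mul_one,
    hU, smul_add, smul_sub, smul_smul]
  match_scalars <;> field_simp
  · ring
  · rw [I_sq, neg_neg]

lemma gaugeTransform_phase_smul [DecidableEq ι] {α : (Fin 4 → ℝ) → ℝ}
    {U : (Fin 4 → ℝ) → Matrix ι ι ℂ} (hα : DifferentiableAt ℝ α x)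
    (hUd : ∀ i j, DifferentiableAt ℝ (fun y => U y i j) x)
    (hU : U x * (U x)ᴴ = 1) (X : Matrix ι ι ℂ) :
    (exp (-(I * α x) / 3) • U x) * X * (exp (-(I * α x) / 3) • U x)ᴴ
        + (exp (-(I * α x) / 3) • U x) * pdM μ (fun y => (exp (-(I * α y) / 3) • U y)ᴴ) x
      = U x * X * (U x)ᴴ + ((I * pdR μ α x / 3) • 1 + U x * pdM μ (fun y => (U y)ᴴ) x) := by
  have hφ : DifferentiableAt ℝ (fun y => exp (-(I * α y) / 3)) x := by fun_prop
  rw [smul_mul_mul_conjTranspose_smul, smul_mul_pdM_conjTranspose_smul hφ hUd, hU,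
    exp_neg_I_mul_div_three_mul_star, exp_neg_I_mul_div_three_mul_star_pdC hα, one_smul, one_smul]

lemma isHermitian_and_trace_eq_zero_gaugeTransform [DecidableEq ι] {U : (Fin 4 → ℝ) → Matrix ι ι ℂ}
    (hU : ∀ y, (U y)ᴴ * U y = 1 ∧ (U y).det = 1)
    (hUd : ∀ i j, DifferentiableAt ℝ (fun y => U y i j) x) {X : Matrix ι ι ℂ}
    (hX : X.IsHermitian ∧ X.trace = 0) {c : ℂ} (hc : star c = -c) :
    (U x * X * (U x)ᴴ + c • (U x * pdM μ (fun y => (U y)ᴴ) x)).IsHermitian ∧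
      (U x * X * (U x)ᴴ + c • (U x * pdM μ (fun y => (U y)ᴴ) x)).trace = 0 :=
  ⟨isHermitian_conj_add_smul hX.1
      (conjTranspose_mul_pdM_conjTranspose (fun y => (hU y).1) hUd) hc,
    trace_conj_add_smul (hU x).1 hX.2
      (trace_mul_pdM_conjTranspose (fun y => (hU y).1) (fun y => (hU y).2) hUd) c⟩

end GaugeTransformation

theorem statement16_general (g1 g2 g3 : ℝ) (hg1 : g1 ≠ 0) (hg2 : g2 ≠ 0) (hg3 : g3 ≠ 0)
    (α : (Fin 4 → ℝ) → ℝ)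
    (q : (Fin 4 → ℝ) → Matrix (Fin 2) (Fin 2) ℂ)
    (n : (Fin 4 → ℝ) → Matrix (Fin 3) (Fin 3) ℂ)
    (hα : Differentiable ℝ α)
    (hq : ∀ x, (q x)ᴴ * q x = 1 ∧ (q x).det = 1)
    (hn : ∀ x, (n x)ᴴ * n x = 1 ∧ (n x).det = 1)
    (hqd : ∀ k l, Differentiable ℝ fun x => q x k l)
    (hnd : ∀ k l, Differentiable ℝ fun x => n x k l)
    (aa B w : Fin 4 → (Fin 4 → ℝ) → ℝ)
    (W : Fin 4 → (Fin 4 → ℝ) → Matrix (Fin 2) (Fin 2) ℂ)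
    (gH V : Fin 4 → (Fin 4 → ℝ) → Matrix (Fin 3) (Fin 3) ℂ)
    (hW : ∀ μ x, (W μ x).IsHermitian ∧ (W μ x).trace = 0)
    (hgH : ∀ μ x, (gH μ x).IsHermitian)
    (hV : ∀ μ x, (V μ x).IsHermitian ∧ (V μ x).trace = 0) :
    let m : (Fin 4 → ℝ) → Matrix (Fin 3) (Fin 3) ℂ :=
      fun x => Complex.exp (-(Complex.I * (α x : ℂ))/3) • n x
    let cr : Fin 4 → (Fin 4 → ℝ) → ℂ :=
      fun μ x => (aa μ x : ℂ) - Complex.I * ((g1 : ℂ)/2) * (B μ x : ℂ)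
    let qr : Fin 4 → (Fin 4 → ℝ) → Matrix (Fin 2) (Fin 2) ℂ :=
      fun μ x => (w μ x : ℂ) • 1 - (Complex.I * ((g2 : ℂ)/2)) • W μ x
    let mr : Fin 4 → (Fin 4 → ℝ) → Matrix (Fin 3) (Fin 3) ℂ :=
      fun μ x => gH μ x + Complex.I •
        ((((g1 : ℂ)/6) * (B μ x : ℂ)) • (1 : Matrix (Fin 3) (Fin 3) ℂ) + ((g3 : ℂ)/2) • V μ x)
    let B' : Fin 4 → (Fin 4 → ℝ) → ℝ := fun μ x => B μ x + (2/g1) * pdR μ α x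
    let W' : Fin 4 → (Fin 4 → ℝ) → Matrix (Fin 2) (Fin 2) ℂ :=
      fun μ x => q x * W μ x * (q x)ᴴ
        + (2 * Complex.I/(g2 : ℂ)) • (q x * pdM μ (fun y => (q y)ᴴ) x)
    let g' : Fin 4 → (Fin 4 → ℝ) → Matrix (Fin 3) (Fin 3) ℂ :=
      fun μ x => n x * gH μ x * (n x)ᴴ
    let V' : Fin 4 → (Fin 4 → ℝ) → Matrix (Fin 3) (Fin 3) ℂ :=
      fun μ x => n x * V μ x * (n x)ᴴ
        - (2 * Complex.I/(g3 : ℂ)) • (n x * pdM μ (fun y => (n y)ᴴ) x)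
    (∀ μ x, cr μ x - Complex.I * (pdR μ α x : ℂ)
        = (aa μ x : ℂ) - Complex.I * ((g1 : ℂ)/2) * (B' μ x : ℂ)) ∧
    (∀ μ x, q x * qr μ x * (q x)ᴴ + q x * pdM μ (fun y => (q y)ᴴ) x
        = (w μ x : ℂ) • 1 - (Complex.I * ((g2 : ℂ)/2)) • W' μ x) ∧
    (∀ μ x, (W' μ x).IsHermitian ∧ (W' μ x).trace = 0) ∧
    (∀ μ x, m x * mr μ x * (m x)ᴴ + m x * pdM μ (fun y => (m y)ᴴ) x
        = g' μ x + Complex.I •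
            ((((g1 : ℂ)/6) * (B' μ x : ℂ)) • (1 : Matrix (Fin 3) (Fin 3) ℂ)
              + ((g3 : ℂ)/2) • V' μ x)) ∧
    (∀ μ x, (g' μ x).IsHermitian) ∧
    (∀ μ x, (V' μ x).IsHermitian ∧ (V' μ x).trace = 0) := by
  intro m cr qr mr B' W' g' V'
  refine ⟨fun μ x => ?_, fun μ x => ?_, fun μ x => ?_, fun μ x => ?_, fun μ x => ?_,
    fun μ x => ?_⟩
  · have hg1' : (g1 : ℂ) ≠ 0 := Complex.ofReal_ne_zero.mpr hg1
    simp only [cr, B']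
    push_cast
    field_simp
    ring
  · exact gaugeTransform_weak_component (mul_eq_one_comm.mp (hq x).1) _ hg2
  · exact isHermitian_and_trace_eq_zero_gaugeTransform hq (fun k l => hqd k l x) (hW μ x)
      (star_two_mul_I_div_ofReal g2)
  · rw [gaugeTransform_phase_smul (hα x) (fun k l => hnd k l x)
      (mul_eq_one_comm.mp (hn x).1)]
    exact gaugeTransform_strong_component (mul_eq_one_comm.mp (hn x).1) _ _ hg1 hg3
  · exact Matrix.isHermitian_mul_mul_conjTranspose _ (hgH μ x)
  · simp only [V', sub_eq_add_neg, ← neg_smul]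
    exact isHermitian_and_trace_eq_zero_gaugeTransform hn (fun k l => hnd k l x) (hV μ x)
      (by rw [star_neg, star_two_mul_I_div_ofReal])

/-- gauge transformation of the physical fields.  With 𝗆 = e^{−iα/3}𝗇,
the fields a_μ and w_μ are invariant, g_μ transforms by conjugation, and B_μ, W_μ, V_μ
transform as the Standard Model gauge fields. -/
theorem statement16 (g1 g2 g3 : ℝ) (hg1 : g1 ≠ 0) (hg2 : g2 ≠ 0) (hg3 : g3 ≠ 0)
    (α : (Fin 4 → ℝ) → ℝ)
    (q : (Fin 4 → ℝ) → Matrix (Fin 2) (Fin 2) ℂ)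
    (n : (Fin 4 → ℝ) → Matrix (Fin 3) (Fin 3) ℂ)
    (hα : Differentiable ℝ α)
    (hq : ∀ x, (q x)ᴴ * q x = 1 ∧ (q x).det = 1)
    (hn : ∀ x, (n x)ᴴ * n x = 1 ∧ (n x).det = 1)
    (hqd : ∀ k l, Differentiable ℝ fun x => q x k l)
    (hnd : ∀ k l, Differentiable ℝ fun x => n x k l)
    (aa B w : Fin 4 → (Fin 4 → ℝ) → ℝ)
    (W : Fin 4 → (Fin 4 → ℝ) → Matrix (Fin 2) (Fin 2) ℂ)
    (gH V : Fin 4 → (Fin 4 → ℝ) → Matrix (Fin 3) (Fin 3) ℂ)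
    (hW : ∀ μ x, (W μ x).IsHermitian ∧ (W μ x).trace = 0)
    (hgH : ∀ μ x, (gH μ x).IsHermitian)
    (hV : ∀ μ x, (V μ x).IsHermitian ∧ (V μ x).trace = 0)
    (had : ∀ μ, Differentiable ℝ (aa μ))
    (hBd : ∀ μ, Differentiable ℝ (B μ))
    (hwd : ∀ μ, Differentiable ℝ (w μ))
    (hWd : ∀ μ k l, Differentiable ℝ fun x => W μ x k l)
    (hgd : ∀ μ k l, Differentiable ℝ fun x => gH μ x k l)
    (hVd : ∀ μ k l, Differentiable ℝ fun x => V μ x k l) :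
    let m : (Fin 4 → ℝ) → Matrix (Fin 3) (Fin 3) ℂ :=
      fun x => Complex.exp (-(Complex.I * (α x : ℂ))/3) • n x
    let cr : Fin 4 → (Fin 4 → ℝ) → ℂ :=
      fun μ x => (aa μ x : ℂ) - Complex.I * ((g1 : ℂ)/2) * (B μ x : ℂ)
    let qr : Fin 4 → (Fin 4 → ℝ) → Matrix (Fin 2) (Fin 2) ℂ :=
      fun μ x => (w μ x : ℂ) • 1 - (Complex.I * ((g2 : ℂ)/2)) • W μ x
    let mr : Fin 4 → (Fin 4 → ℝ) → Matrix (Fin 3) (Fin 3) ℂ :=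
      fun μ x => gH μ x + Complex.I •
        ((((g1 : ℂ)/6) * (B μ x : ℂ)) • (1 : Matrix (Fin 3) (Fin 3) ℂ) + ((g3 : ℂ)/2) • V μ x)
    let B' : Fin 4 → (Fin 4 → ℝ) → ℝ := fun μ x => B μ x + (2/g1) * pdR μ α x
    let W' : Fin 4 → (Fin 4 → ℝ) → Matrix (Fin 2) (Fin 2) ℂ :=
      fun μ x => q x * W μ x * (q x)ᴴ
        + (2 * Complex.I/(g2 : ℂ)) • (q x * pdM μ (fun y => (q y)ᴴ) x)
    let g' : Fin 4 → (Fin 4 → ℝ) → Matrix (Fin 3) (Fin 3) ℂ :=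
      fun μ x => n x * gH μ x * (n x)ᴴ
    let V' : Fin 4 → (Fin 4 → ℝ) → Matrix (Fin 3) (Fin 3) ℂ :=
      fun μ x => n x * V μ x * (n x)ᴴ
        - (2 * Complex.I/(g3 : ℂ)) • (n x * pdM μ (fun y => (n y)ᴴ) x)
    (∀ μ x, cr μ x - Complex.I * (pdR μ α x : ℂ)
        = (aa μ x : ℂ) - Complex.I * ((g1 : ℂ)/2) * (B' μ x : ℂ)) ∧
    (∀ μ x, q x * qr μ x * (q x)ᴴ + q x * pdM μ (fun y => (q y)ᴴ) x
        = (w μ x : ℂ) • 1 - (Complex.I * ((g2 : ℂ)/2)) • W' μ x) ∧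
    (∀ μ x, (W' μ x).IsHermitian ∧ (W' μ x).trace = 0) ∧
    (∀ μ x, m x * mr μ x * (m x)ᴴ + m x * pdM μ (fun y => (m y)ᴴ) x
        = g' μ x + Complex.I •
            ((((g1 : ℂ)/6) * (B' μ x : ℂ)) • (1 : Matrix (Fin 3) (Fin 3) ℂ)
              + ((g3 : ℂ)/2) • V' μ x)) ∧
    (∀ μ x, (g' μ x).IsHermitian) ∧
    (∀ μ x, (V' μ x).IsHermitian ∧ (V' μ x).trace = 0) :=
  statement16_general g1 g2 g3 hg1 hg2 hg3 α q n hα hq hn hqd hnd aa B w W gH V hW hgH hV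

end TwistSM
end
end

section
/- Let H_r be a quaternionic 2×2 matrix with first column (φ₁, φ₂), let α ∈ ℝ, let 𝗊 be a unitary quaternionic 2×2 matrix (an element of SU(2)), and set 𝛂 := diag(e^{iα}, e^{−iα}). Define the gauge-transformed field H^u_r := 𝗊·(H_r + I₂)·𝛂† − I₂. Then H^u_r is again a quaternionic matrix, and its components transform as a Higgs doublet: ((H^u_r)_{11} + 1, (H^u_r)_{21})ᵀ = e^{−iα}·𝗊·(φ₁ + 1, φ₂)ᵀ. -/
open Matrix

noncomputable section

namespace TwistSM

/-- the gauge-transformed field H^u_r = 𝗊(H_r + I)𝛂† − I is again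
quaternionic and its components transform as a Higgs doublet. -/
theorem statement17 (H : Matrix (Fin 2) (Fin 2) ℂ) (hH : IsQuat H) (α : ℝ)
    (q : Matrix (Fin 2) (Fin 2) ℂ) (hq : IsQuat q) (hqu : qᴴ * q = 1) :
    let aα : Matrix (Fin 2) (Fin 2) ℂ :=
      Matrix.diagonal ![Complex.exp (Complex.I * (α : ℂ)), Complex.exp (-(Complex.I * (α : ℂ)))]
    let Hu : Matrix (Fin 2) (Fin 2) ℂ := q * (H + 1) * aαᴴ - 1
    IsQuat Hu ∧
    ![Hu 0 0 + 1, Hu 1 0]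
      = Complex.exp (-(Complex.I * (α : ℂ))) • q.mulVec ![H 0 0 + 1, H 1 0] := by
  intro aα Hu
  obtain ⟨hH1, hH2⟩ := hH
  obtain ⟨hq1, hq2⟩ := hq
  have hconj : (starRingEnd ℂ) (Complex.exp (Complex.I * α)) = Complex.exp (-(Complex.I * α)) := by
    rw [← Complex.exp_conj]; simp [Complex.conj_ofReal]
  have hconj2 : (starRingEnd ℂ) (Complex.exp (-(Complex.I * α))) = Complex.exp (Complex.I * α) := by
    rw [← Complex.exp_conj]; simp [Complex.conj_ofReal]
  constructor
  · constructor <;>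
    · simp only [Hu, aα, Matrix.sub_apply, Matrix.mul_apply, Matrix.conjTranspose_apply,
        Matrix.diagonal_apply, Matrix.add_apply, Matrix.one_apply, Fin.sum_univ_two]
      simp only [map_add, _root_.map_mul, map_sub, map_neg, _root_.map_one, map_zero, hconj, hconj2,
        hH1, hH2, hq1, hq2, Matrix.cons_val_zero, Matrix.cons_val_one, Matrix.head_cons,
        RingHomCompTriple.comp_apply, RingHom.id_apply, Complex.conj_conj]
      simp [hconj, hconj2]
      ring
  · funext i
    fin_cases i <;>
    · simp [Hu, aα, Matrix.mulVec, dotProduct, Matrix.mul_apply, Fin.sum_univ_two,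
        Matrix.sub_apply, Matrix.one_apply, hconj, hconj2]
      ring


end TwistSM
end
end

section
/- Let u = (e^{iα}, e^{iα}, 𝗊, 𝗊, 𝗆, 𝗆) be a twist-invariant unitary of the twisted algebra, where α ∈ ℝ, 𝗊 is a unitary quaternionic 2×2 matrix and 𝗆 ∈ U(3), with representation π(u) on ℂ¹²⁸. Then π(u) commutes with γ⁵⊗D_M, and for every off-diagonal twisted 1-form A_M = [[0, C],[D, 0]]_C with C = k_R·δ_ṡ·diag_s(σ·Ξ, −σ'·Ξ) and D = conj(k_R)·δ_ṡ·diag_s(σ·Ξ, −σ'·Ξ) (σ, σ' ∈ ℂ), one has π(u)·A_M·π(u)† = A_M. In particular the scalar fields σ, σ' (hence σ_r := σ + conj(σ) and σ_l := −(σ' + conj(σ'))) are gauge invariant. -/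
open Matrix

noncomputable section

namespace TwistSM

def zI : Intl := ((0:Fin 4), ((0:Fin 2),(0:Fin 2)))

lemma rep_col {a : Alg} (h : a.c' = a.c) (p k : Full)
    (hk : k.2.2.2 = zI) : rep a p k = if p = k then a.c else 0 := by
  obtain ⟨pc, ps, pd, pI, pa1, pa2⟩ := p
  obtain ⟨kc, ks, kd, kI, ka1, ka2⟩ := k
  simp only [zI, Prod.mk.injEq] at hk
  obtain ⟨h1, h2, h3⟩ := hk
  subst h1 h2 h3
  simp only [rep, dgB, Qmat, Mmat, liftQ, liftI, Qr, Ql, Mr, Ml, msect, sm4, cdiag,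
    Matrix.of_apply, Prod.mk.injEq, h]
  fin_cases pc <;> fin_cases kc <;> fin_cases ps <;> fin_cases ks <;>
    fin_cases pa1 <;> fin_cases pa2 <;> fin_cases pI <;>
    simp_all [Matrix.diagonal_apply, Prod.ext_iff, pred3]

lemma rep_row {a : Alg} (h : a.c' = a.c) (k q : Full)
    (hk : k.2.2.2 = zI) : rep a k q = if q = k then a.c else 0 := by
  obtain ⟨pc, ps, pd, pI, pa1, pa2⟩ := q
  obtain ⟨kc, ks, kd, kI, ka1, ka2⟩ := k
  simp only [zI, Prod.mk.injEq] at hk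
  obtain ⟨h1, h2, h3⟩ := hk
  subst h1 h2 h3
  simp only [rep, dgB, Qmat, Mmat, liftQ, liftI, Qr, Ql, Mr, Ml, msect, sm4, cdiag,
    Matrix.of_apply, Prod.mk.injEq, h]
  fin_cases pc <;> fin_cases kc <;> fin_cases ps <;> fin_cases ks <;>
    fin_cases pa1 <;> fin_cases pa2 <;> fin_cases pI <;>
    simp_all [Matrix.diagonal_apply, Prod.ext_iff, pred3] <;> exact if_congr eq_comm rfl rfl

lemma mul_left_scalar {a : Alg} (h : a.c' = a.c) (T : Matrix Full Full ℂ)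
    (hT : ∀ k q : Full, k.2.2.2 ≠ zI → T k q = 0) : rep a * T = a.c • T := by
  ext p q
  rw [Matrix.mul_apply, Matrix.smul_apply]
  have key : ∀ k : Full, rep a p k * T k q = if k = p then a.c * T p q else 0 := by
    intro k
    by_cases hk : k.2.2.2 = zI
    · rw [rep_col h p k hk]
      by_cases hpk : p = k
      · subst hpk; simp
      · simp [hpk, Ne.symm hpk]
    · rw [hT k q hk, mul_zero]
      by_cases hpk : k = p
      · subst hpk; rw [hT k q hk, mul_zero, if_pos rfl]
      · rw [if_neg hpk]
  simp_rw [key]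
  simp [smul_eq_mul]

lemma mul_right_scalar {a : Alg} (h : a.c' = a.c) (T : Matrix Full Full ℂ)
    (hT : ∀ p k : Full, k.2.2.2 ≠ zI → T p k = 0) : T * rep a = a.c • T := by
  ext p q
  rw [Matrix.mul_apply, Matrix.smul_apply]
  have key : ∀ k : Full, T p k * rep a k q = if k = q then a.c * T p q else 0 := by
    intro k
    by_cases hk : k.2.2.2 = zI
    · rw [rep_row h k q hk]
      by_cases hpk : q = k
      · subst hpk; simp [mul_comm]
      · simp [hpk, Ne.symm hpk]
    · rw [hT p k hk, zero_mul]
      by_cases hpk : k = q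
      · subst hpk; rw [hT p k hk, mul_zero, if_pos rfl]
      · rw [if_neg hpk]
  simp_rw [key]
  simp [smul_eq_mul]

lemma mul_conj_scalar {a : Alg} (h : a.c' = a.c) (T : Matrix Full Full ℂ)
    (hT : ∀ p k : Full, k.2.2.2 ≠ zI → T p k = 0) :
    T * (rep a)ᴴ = (starRingEnd ℂ) a.c • T := by
  ext p q
  rw [Matrix.mul_apply, Matrix.smul_apply]
  have key : ∀ k : Full, T p k * (rep a)ᴴ k q
      = if k = q then (starRingEnd ℂ) a.c * T p q else 0 := by
    intro k
    rw [Matrix.conjTranspose_apply]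
    by_cases hk : k.2.2.2 = zI
    · rw [rep_col h q k hk]
      by_cases hpk : q = k
      · subst hpk; simp [mul_comm]
      · simp [hpk, Ne.symm hpk]
    · rw [hT p k hk, zero_mul]
      by_cases hpk : k = q
      · subst hpk; rw [hT p k hk, mul_zero, if_pos rfl]
      · rw [if_neg hpk]
  simp_rw [key]
  simp [smul_eq_mul]

lemma XiI_supp {a b : Intl} (h : a ≠ zI ∨ b ≠ zI) : XiI a b = 0 := by
  unfold XiI
  rw [Matrix.of_apply, if_neg]
  rintro ⟨rfl, h1, h2⟩
  obtain ⟨a1, a2⟩ := a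
  simp only at h1 h2
  subst h1 h2
  rcases h with h | h <;> exact h rfl

lemma A_supp (kR σ σ' : ℂ) (p q : Full) (h : p.2.2.2 ≠ zI ∨ q.2.2.2 ≠ zI) :
    odB (kR • dgB (liftI (σ • XiI)) (liftI ((-σ') • XiI)))
        ((starRingEnd ℂ) kR • dgB (liftI (σ • XiI)) (liftI ((-σ') • XiI))) p q = 0 := by
  have h0 := XiI_supp h
  simp only [odB, dgB, liftI, Matrix.of_apply, Matrix.smul_apply, smul_eq_mul, h0, mul_zero]
  split_ifs <;> simp

lemma g5DM_supp (kR : ℂ) (p q : Full) (h : p.2.2.2 ≠ zI ∨ q.2.2.2 ≠ zI) :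
    g5DM kR p q = 0 := by
  have h0 := XiI_supp h
  have h1 := XiI_supp (Or.symm h)
  simp only [g5DM, etaD, odB, dgB, liftI, Matrix.of_apply, Matrix.smul_apply,
    Matrix.conjTranspose_apply, Matrix.neg_apply, smul_eq_mul, h0, h1, mul_zero, map_zero,
    neg_zero, star_zero]
  split_ifs <;> simp

lemma exp_mul_conj (α : ℝ) :
    Complex.exp (Complex.I * α) * (starRingEnd ℂ) (Complex.exp (Complex.I * α)) = 1 := by
  rw [← Complex.exp_conj, _root_.map_mul, Complex.conj_I, Complex.conj_ofReal, ← Complex.exp_add]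
  ring_nf
  exact Complex.exp_zero

/-- a twist-invariant unitary u = (e^{iα}, e^{iα}, 𝗊, 𝗊, 𝗆, 𝗆) commutes with
γ⁵⊗D_M, and π(u)·A_M·π(u)† = A_M for every off-diagonal twisted 1-form A_M; in particular
the scalar fields σ, σ' are gauge invariant. -/
theorem statement18 (α : ℝ) (qq : Matrix (Fin 2) (Fin 2) ℂ) (mm : Matrix (Fin 3) (Fin 3) ℂ)
    (hq : IsQuat qq) (hqu : qqᴴ * qq = 1) (hmm : mmᴴ * mm = 1) :
    let u : Alg := ⟨Complex.exp (Complex.I * (α : ℂ)), Complex.exp (Complex.I * (α : ℂ)),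
      qq, qq, mm, mm, hq, hq⟩
    (∀ kR : ℂ, rep u * g5DM kR = g5DM kR * rep u) ∧
    (∀ kR σ σ' : ℂ,
      rep u *
        odB (kR • dgB (liftI (σ • XiI)) (liftI ((-σ') • XiI)))
            ((starRingEnd ℂ) kR • dgB (liftI (σ • XiI)) (liftI ((-σ') • XiI))) *
        (rep u)ᴴ
      = odB (kR • dgB (liftI (σ • XiI)) (liftI ((-σ') • XiI)))
            ((starRingEnd ℂ) kR • dgB (liftI (σ • XiI)) (liftI ((-σ') • XiI)))) := by
  intro u
  have hcc : u.c * (starRingEnd ℂ) u.c = 1 := exp_mul_conj α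
  constructor
  · intro kR
    rw [mul_left_scalar rfl (g5DM kR) (fun k q hk => g5DM_supp kR k q (Or.inl hk)),
        mul_right_scalar rfl (g5DM kR) (fun p k hk => g5DM_supp kR p k (Or.inr hk))]
  · intro kR σ σ'
    rw [mul_left_scalar rfl _ (fun k q hk => A_supp kR σ σ' k q (Or.inl hk)),
        Matrix.smul_mul,
        mul_conj_scalar rfl _ (fun p k hk => A_supp kR σ σ' p k (Or.inr hk)),
        smul_smul, hcc, one_smul]


end TwistSM
end
end
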